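/- Assume n i ≠ −1 for all i, ∑_{i} n i = −2, and at least three indices i have n i odd. Then H equals the intersection of the kernel of Φ̄ : G → ∏_{i < j} ZMod (N i j), defined componentwise by Φ̄(x)_{i j} = (reduction of x i to ZMod (N i j)) − (reduction of x j to ZMod (N i j)), with the kernel of s̄ : G → ZMod 2 defined by s̄(x) = ∑_{i : n i odd} (reduction of x i to ZMod 2). -/
import Mathlib


/-- `N i j`: the gcd (as a nonnegative integer) of the family consisting of `n k` for
`k ∉ {i, j}` together with `n i + 1` and `n j + 1`. -/
def Npair {r : ℕ} (n : Fin r → ℤ) (i j : Fin r) : ℕ :=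
  Nat.gcd ((Finset.univ \ {i, j}).gcd fun k => (n k).natAbs)
    (Nat.gcd (n i + 1).natAbs (n j + 1).natAbs)

/-- The element `m • e i` of `G = ∏_{j} ZMod |n j + 1|`: the `i`-th coordinate is the image
of `m` in `ZMod |n i + 1|`, and all other coordinates are `0`. -/
def esingle {r : ℕ} (n : Fin r → ℤ) (i : Fin r) (m : ℤ) :
    (j : Fin r) → ZMod ((n j + 1).natAbs) :=
  Pi.single i (m : ZMod ((n i + 1).natAbs))

/-- `τ i j = (n j) • e i + (n i) • e j`. -/
def tau {r : ℕ} (n : Fin r → ℤ) (i j : Fin r) : (k : Fin r) → ZMod ((n k + 1).natAbs) :=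
  esingle n i (n j) + esingle n j (n i)

/-- `H`: the subgroup of `G` generated by the elements `τ i j` over all pairs `i ≠ j`. -/
def Hsub {r : ℕ} (n : Fin r → ℤ) : AddSubgroup ((k : Fin r) → ZMod ((n k + 1).natAbs)) :=
  AddSubgroup.closure {x | ∃ i j, i ≠ j ∧ x = tau n i j}

lemma Npair_dvd_fst {r : ℕ} (n : Fin r → ℤ) (i j : Fin r) : Npair n i j ∣ (n i + 1).natAbs :=
  (Nat.gcd_dvd_right _ _).trans (Nat.gcd_dvd_left _ _)

lemma Npair_dvd_snd {r : ℕ} (n : Fin r → ℤ) (i j : Fin r) : Npair n i j ∣ (n j + 1).natAbs :=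
  (Nat.gcd_dvd_right _ _).trans (Nat.gcd_dvd_right _ _)

/-- The homomorphism `Φ̄ : G → ∏_{i < j} ZMod (N i j)`, whose `(i, j)`-component is the
reduction of `x i` minus the reduction of `x j` in `ZMod (N i j)`. -/
def Phibar {r : ℕ} (n : Fin r → ℤ) :
    ((i : Fin r) → ZMod ((n i + 1).natAbs)) →+
      ((p : {p : Fin r × Fin r // p.1 < p.2}) → ZMod (Npair n p.1.1 p.1.2)) :=
  AddMonoidHom.mk'
    (fun x p =>
      ZMod.castHom (Npair_dvd_fst n p.1.1 p.1.2) (ZMod (Npair n p.1.1 p.1.2)) (x p.1.1)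
        - ZMod.castHom (Npair_dvd_snd n p.1.1 p.1.2) (ZMod (Npair n p.1.1 p.1.2)) (x p.1.2))
    (fun x y => by funext p; simp [Pi.add_apply, map_add]; ring)

lemma two_dvd_natAbs_add_one {a : ℤ} (h : Odd a) : 2 ∣ (a + 1).natAbs := by
  have h2 : (2:ℤ) ∣ a + 1 := by obtain ⟨m, hm⟩ := h; exact ⟨m + 1, by omega⟩
  simpa using Int.natAbs_dvd_natAbs.mpr h2

/-- The homomorphism `s̄ : G → ZMod 2`, `s̄ x = ∑_{i : n i odd}` (reduction of `x i` mod 2). -/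
def sbar {r : ℕ} (n : Fin r → ℤ) : ((i : Fin r) → ZMod ((n i + 1).natAbs)) →+ ZMod 2 :=
  AddMonoidHom.mk'
    (fun x => ∑ i, if h : Odd (n i) then
      ZMod.castHom (two_dvd_natAbs_add_one h) (ZMod 2) (x i) else 0)
    (fun x y => by
      rw [← Finset.sum_add_distrib]
      refine Finset.sum_congr rfl fun i _ => ?_
      by_cases h : Odd (n i) <;> simp [h, map_add])


section
variable {r : ℕ} (n : Fin r → ℤ)

def EZ (i : Fin r) (c : ℤ) : Fin r → ℤ := Pi.single i c

def tauZ (i j : Fin r) : Fin r → ℤ := EZ i (n j) + EZ j (n i)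

def LZ : AddSubgroup (Fin r → ℤ) :=
  AddSubgroup.closure ({x | ∃ i j, i ≠ j ∧ x = tauZ n i j} ∪ {x | ∃ i, x = EZ i (n i + 1)})

def QZ (q : ℤ) : AddSubgroup (Fin r → ℤ) where
  carrier := {y | ∀ m, q ∣ y m}
  zero_mem' := by intro m; simp
  add_mem' := by intro x y hx hy m; exact (hx m).add (hy m)
  neg_mem' := by intro x hx m; exact dvd_neg.mpr (hx m)

def RZ (q : ℤ) : AddSubgroup (Fin r → ℤ) := LZ n ⊔ QZ q

variable (q : ℤ)


def Npair' {r : ℕ} (n : Fin r → ℤ) (i j : Fin r) : ℕ :=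
  Nat.gcd ((Finset.univ \ {i, j}).gcd fun k => (n k).natAbs)
    (Nat.gcd (n i + 1).natAbs (n j + 1).natAbs)

lemma Npair'_comm (i j : Fin r) : Npair' n i j = Npair' n j i := by
  unfold Npair'
  rw [Finset.pair_comm, Nat.gcd_comm (n i + 1).natAbs]

lemma Npair'_dvd_fst (i j : Fin r) : (Npair' n i j : ℤ) ∣ (n i + 1) := by
  have h : Npair' n i j ∣ (n i + 1).natAbs := (Nat.gcd_dvd_right _ _).trans (Nat.gcd_dvd_left _ _)
  exact (Int.natCast_dvd_natCast.mpr h).trans (Int.natAbs_dvd.mpr dvd_rfl)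

lemma Npair'_dvd_snd (i j : Fin r) : (Npair' n i j : ℤ) ∣ (n j + 1) := by
  rw [Npair'_comm]; exact Npair'_dvd_fst n j i

lemma EZ_add (i : Fin r) (b c : ℤ) : EZ i b + EZ i c = EZ i (b + c) := by
  simp [EZ, Pi.single_add]

lemma smul_EZ (d : ℤ) (i : Fin r) (c : ℤ) : d • EZ i c = EZ i (d * c) := by
  unfold EZ
  funext m
  by_cases h : m = i <;> simp [h, Pi.single_apply]

lemma tauZ_mem_LZ {i j : Fin r} (h : i ≠ j) : tauZ n i j ∈ LZ n :=
  AddSubgroup.subset_closure (Or.inl ⟨i, j, h, rfl⟩)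

lemma aEZ_mem_LZ (i : Fin r) : EZ i (n i + 1) ∈ LZ n :=
  AddSubgroup.subset_closure (Or.inr ⟨i, rfl⟩)

lemma LZ_le_RZ : LZ n ≤ RZ n q := le_sup_left
lemma QZ_le_RZ : QZ q ≤ RZ n q := le_sup_right

lemma EZ_mem_QZ (i : Fin r) {c : ℤ} (h : q ∣ c) : EZ i c ∈ QZ q := by
  intro m
  unfold EZ
  rcases eq_or_ne m i with rfl | hm
  · simpa using h
  · simp [Pi.single_apply, hm]

lemma key_identity {i j k : Fin r} (hij : i ≠ j) (hik : i ≠ k) (hjk : j ≠ k) :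
    n k • tauZ n i j + n j • tauZ n i k - n i • tauZ n j k = EZ i (2 * n j * n k) := by
  unfold tauZ EZ
  funext m
  rcases eq_or_ne m i with rfl | hmi
  · simp [Pi.single_apply, hij.symm, hik.symm]
    ring
  · rcases eq_or_ne m j with rfl | hmj
    · simp [Pi.single_apply, hmi, hjk, hij]
      ring
    · rcases eq_or_ne m k with rfl | hmk
      · simp [Pi.single_apply, hmi, hmj.symm, hik, hjk]
        ring
      · simp [Pi.single_apply, hmi, hmj.symm, hmk.symm]

lemma coprime_solve {q b : ℤ} (h : IsCoprime q b) (c : ℤ) : ∃ d, q ∣ c - b * d := by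
  obtain ⟨u, v, huv⟩ := h
  refine ⟨v * c, ⟨u * c, ?_⟩⟩
  have h1 : u * q + v * b = 1 := huv
  linear_combination (-c) * h1

/-- The ideal of integers `b` such that all multiples of `b` can be placed in
coordinate `i` within `RZ n q`. -/
def Ival (i : Fin r) : Ideal ℤ where
  carrier := {b | ∀ c, EZ i (c * b) ∈ RZ n q}
  zero_mem' := by intro c; simpa [EZ] using (RZ n q).zero_mem
  add_mem' := by
    intro x y hx hy c
    have h := (RZ n q).add_mem (hx c) (hy c)
    have h2 : EZ i (c * x) + EZ i (c * y) = EZ (r := r) i (c * (x + y)) := by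
      rw [EZ_add]; ring_nf
    rwa [h2] at h
  smul_mem' := by
    intro m x hx c
    have h := hx (c * m)
    simpa [mul_assoc] using h

lemma q_mem_Ival (i : Fin r) : q ∈ Ival n q i := fun c =>
  QZ_le_RZ n q (EZ_mem_QZ q i (dvd_mul_left q c))

lemma a_mem_Ival (i : Fin r) : (n i + 1) ∈ Ival n q i := fun c => by
  have h := (LZ n).zsmul_mem (aEZ_mem_LZ n i) c
  rw [smul_EZ] at h
  exact LZ_le_RZ n q h

lemma single_mem_RZ_of_coprime {b : ℤ} (hb : b ∈ Ival n q i) (h : IsCoprime q b) (c : ℤ) :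
    EZ i c ∈ RZ n q := by
  obtain ⟨d, hd⟩ := coprime_solve h c
  have h1 : EZ (r := r) i c = EZ i (d * b) + EZ i (c - b * d) := by
    rw [EZ_add]; ring_nf
  rw [h1]
  exact (RZ n q).add_mem (hb d) (QZ_le_RZ n q (EZ_mem_QZ q i hd))

/-- coordinate with invertible `a i` is free -/
lemma single_mem_RZ_of_coprime_a (h : IsCoprime q (n i + 1)) (c : ℤ) : EZ i c ∈ RZ n q :=
  single_mem_RZ_of_coprime n q (a_mem_Ival n q i) h c

/-- trading: if `a k` is invertible, `n k` is available at coordinate `i ≠ k`. -/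
lemma trade_mem_Ival {i k : Fin r} (hik : i ≠ k) (h : IsCoprime q (n k + 1)) :
    n k ∈ Ival n q i := by
  intro c
  have htau : c • tauZ n i k = EZ i (c * n k) + EZ k (c * n i) := by
    unfold tauZ
    rw [smul_add, smul_EZ, smul_EZ]
  have h1 : EZ (r := r) i (c * n k) = c • tauZ n i k - EZ k (c * n i) := by
    rw [htau]; abel
  rw [h1]
  exact (RZ n q).sub_mem (LZ_le_RZ n q ((LZ n).zsmul_mem (tauZ_mem_LZ n hik) c))
    (single_mem_RZ_of_coprime_a n q h _)

/-- two units trick: `2 * n j * n k` is available at coordinate `i`. -/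
lemma two_mem_Ival {i j k : Fin r} (hij : i ≠ j) (hik : i ≠ k) (hjk : j ≠ k) :
    2 * n j * n k ∈ Ival n q i := by
  intro c
  have h1 : EZ (r := r) i (c * (2 * n j * n k)) =
      c • (n k • tauZ n i j + n j • tauZ n i k - n i • tauZ n j k) := by
    rw [key_identity n hij hik hjk, smul_EZ]
  rw [h1]
  refine LZ_le_RZ n q ((LZ n).zsmul_mem ?_ c)
  exact (LZ n).sub_mem ((LZ n).add_mem ((LZ n).zsmul_mem (tauZ_mem_LZ n hij) _)
    ((LZ n).zsmul_mem (tauZ_mem_LZ n hik) _)) ((LZ n).zsmul_mem (tauZ_mem_LZ n hjk) _)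

lemma natgcd_mem_ideal {I : Ideal ℤ} {a b : ℕ} (ha : (a : ℤ) ∈ I) (hb : (b : ℤ) ∈ I) :
    ((Nat.gcd a b : ℕ) : ℤ) ∈ I := by
  have h : (Nat.gcd a b : ℤ) = Int.gcd (a : ℤ) (b : ℤ) := by
    rw [Int.gcd_natCast_natCast]
  rw [h, Int.gcd_eq_gcd_ab]
  exact I.add_mem (I.mul_mem_right _ ha) (I.mul_mem_right _ hb)

lemma natAbs_mem_ideal {I : Ideal ℤ} {a : ℤ} (ha : a ∈ I) : ((a.natAbs : ℕ) : ℤ) ∈ I := by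
  rcases Int.natAbs_eq a with h | h
  · rwa [← h]
  · have := I.neg_mem ha
    rw [h] at this
    simpa using this

lemma gcd_nat_mem_ideal {ι : Type*} (s : Finset ι) (f : ι → ℕ) (I : Ideal ℤ)
    (hf : ∀ k ∈ s, (f k : ℤ) ∈ I) : ((s.gcd f : ℕ) : ℤ) ∈ I := by
  classical
  induction s using Finset.induction with
  | empty => simp
  | @insert a s' ha ih =>
    rw [Finset.gcd_insert]
    have h1 : (f a : ℤ) ∈ I := hf a (Finset.mem_insert_self _ _)
    have h2 : ((s'.gcd f : ℕ) : ℤ) ∈ I := ih fun k hk => hf k (Finset.mem_insert_of_mem hk)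
    have h3 : (Nat.gcd (f a) (s'.gcd f) : ℤ) ∈ I := natgcd_mem_ideal h1 h2
    rwa [gcd_eq_nat_gcd]

end
section pair
variable {r : ℕ} (n : Fin r → ℤ)

lemma mem_Ival_iff {q b : ℤ} {i : Fin r} : b ∈ Ival n q i ↔ ∀ c, EZ i (c * b) ∈ RZ n q :=
  Iff.rfl

/-- core of the pair lemma, asymmetric version -/
lemma pair_core {p e : ℕ} (hp : p.Prime)
    {i j : Fin r} (hij : i ≠ j)
    (hpi : ¬ (p:ℤ) ∣ n i)
    (hk : ∀ k, k ≠ i → k ≠ j → IsCoprime ((p:ℤ)^e) (n k + 1))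
    (hPij : Nat.gcd (Nat.gcd ((Finset.univ \ ({i, j} : Finset (Fin r))).gcd
        fun k => (n k).natAbs) (n i + 1).natAbs) (p^e) ∣
      Nat.gcd (Nat.gcd ((Finset.univ \ ({i, j} : Finset (Fin r))).gcd
        fun k => (n k).natAbs) (n j + 1).natAbs) (p^e))
    (yi yj : ℤ) (hN : (Npair' n i j : ℤ) ∣ yi - yj) :
    EZ i yi + EZ j yj ∈ RZ n ((p:ℤ)^e) := by
  set q : ℤ := (p:ℤ)^e with hq
  have hqe : ((p^e : ℕ) : ℤ) = q := by push_cast; rfl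
  set g' : ℕ := (Finset.univ \ ({i, j} : Finset (Fin r))).gcd fun k => (n k).natAbs with hg'
  set gi : ℕ := Nat.gcd g' (n i + 1).natAbs with hgidef
  set gj : ℕ := Nat.gcd g' (n j + 1).natAbs with hgjdef
  set Pi' : ℕ := Nat.gcd gi (p^e) with hPidef
  set Pj' : ℕ := Nat.gcd gj (p^e) with hPjdef
  have hpZ : Prime ((p:ℕ):ℤ) := Nat.prime_iff_prime_int.mp hp
  have hqcop_ni : IsCoprime q (n i) := (hpZ.coprime_iff_not_dvd.mpr hpi).pow_left
  obtain ⟨c, hc⟩ := coprime_solve hqcop_ni yj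
  set ρ : ℤ := yi - c * n j with hρdef
  -- the ideal membership of gi at coordinate i
  have hgi_mem : ((gi : ℕ) : ℤ) ∈ Ival n q i := by
    apply natgcd_mem_ideal
    · apply gcd_nat_mem_ideal
      intro k hk'
      rw [Finset.mem_sdiff, Finset.mem_insert, Finset.mem_singleton] at hk'
      have hki : k ≠ i := fun h => hk'.2 (Or.inl h)
      have hkj : k ≠ j := fun h => hk'.2 (Or.inr h)
      exact natAbs_mem_ideal (trade_mem_Ival n q hki.symm (hk k hki hkj))
    · exact natAbs_mem_ideal (a_mem_Ival n q i)
  -- Pi' divides Npair'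
  have hPi_dvd_N : Pi' ∣ Npair' n i j := by
    apply Nat.dvd_gcd
    · exact (Nat.gcd_dvd_left _ _).trans (Nat.gcd_dvd_left _ _)
    · apply Nat.dvd_gcd
      · exact (Nat.gcd_dvd_left _ _).trans (Nat.gcd_dvd_right _ _)
      · exact hPij.trans ((Nat.gcd_dvd_left _ _).trans (Nat.gcd_dvd_right _ _))
  have hPiq : ((Pi' : ℕ) : ℤ) ∣ q := by
    rw [← hqe]
    exact Int.natCast_dvd_natCast.mpr (Nat.gcd_dvd_right _ _)
  have hNd : (Npair' n i j : ℤ) ∣ n i - n j := by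
    have h : n i - n j = (n i + 1) - (n j + 1) := by ring
    rw [h]
    exact dvd_sub (Npair'_dvd_fst n i j) (Npair'_dvd_snd n i j)
  have h1 : (Npair' n i j : ℤ) ∣ n i * yi - n j * yj := by
    have h : n i * yi - n j * yj = n i * (yi - yj) + (n i - n j) * yj := by ring
    rw [h]
    exact dvd_add (hN.mul_left _) (hNd.mul_right _)
  have h2 : ((Pi' : ℕ) : ℤ) ∣ n i * ρ := by
    have h : n i * ρ = (n i * yi - n j * yj) + n j * (yj - n i * c) := by rw [hρdef]; ring
    rw [h]
    refine dvd_add (((Int.natCast_dvd_natCast.mpr hPi_dvd_N).trans h1)) ?_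
    exact (hPiq.trans hc).mul_left _
  have hPcop : IsCoprime ((Pi' : ℕ) : ℤ) (n i) :=
    IsCoprime.of_isCoprime_of_dvd_left hqcop_ni hPiq
  obtain ⟨ρ', hρ'⟩ := hPcop.dvd_of_dvd_mul_left h2
  -- Bezout for Pi'
  have hbez : ((Pi' : ℕ) : ℤ)
      = (gi : ℤ) * Int.gcdA (gi : ℤ) ((p^e : ℕ) : ℤ)
        + ((p^e : ℕ) : ℤ) * Int.gcdB (gi : ℤ) ((p^e : ℕ) : ℤ) := by
    have h := Int.gcd_eq_gcd_ab ((gi : ℕ) : ℤ) ((p^e : ℕ) : ℤ)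
    rwa [Int.gcd_natCast_natCast] at h
  have hEρ : EZ i ρ ∈ RZ n q := by
    have heq : ρ = (ρ' * Int.gcdA (gi : ℤ) ((p^e : ℕ) : ℤ)) * (gi : ℤ)
        + (ρ' * Int.gcdB (gi : ℤ) ((p^e : ℕ) : ℤ)) * q := by
      rw [hρ', hbez, ← hqe]; ring
    have hsum : EZ (r := r) i ρ
        = EZ i ((ρ' * Int.gcdA (gi : ℤ) ((p^e : ℕ) : ℤ)) * (gi : ℤ))
          + EZ i ((ρ' * Int.gcdB (gi : ℤ) ((p^e : ℕ) : ℤ)) * q) := by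
      rw [EZ_add, ← heq]
    rw [hsum]
    exact (RZ n q).add_mem ((mem_Ival_iff n).mp hgi_mem _) ((mem_Ival_iff n).mp (q_mem_Ival n q i) _)
  -- assemble
  have hfin : EZ i yi + EZ j yj = c • tauZ n i j + (EZ i ρ + EZ j (yj - n i * c)) := by
    unfold tauZ
    rw [smul_add, smul_EZ, smul_EZ, add_add_add_comm, EZ_add, EZ_add]
    have e1 : c * n j + ρ = yi := by rw [hρdef]; ring
    have e2 : c * n i + (yj - n i * c) = yj := by ring
    rw [e1, e2]
  rw [hfin]
  refine (RZ n q).add_mem (LZ_le_RZ n q ((LZ n).zsmul_mem (tauZ_mem_LZ n hij) c)) ?_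
  exact (RZ n q).add_mem hEρ (QZ_le_RZ n q (EZ_mem_QZ q j hc))

end pair
section locallemma
variable {r : ℕ} (n : Fin r → ℤ)

lemma pair_mem {p e : ℕ} (hp : p.Prime) {i j : Fin r} (hij : i ≠ j)
    (hpi : ¬ (p:ℤ) ∣ n i) (hpj : ¬ (p:ℤ) ∣ n j)
    (hk : ∀ k, k ≠ i → k ≠ j → IsCoprime ((p:ℤ)^e) (n k + 1))
    (yi yj : ℤ) (hN : (Npair' n i j : ℤ) ∣ yi - yj) :
    EZ i yi + EZ j yj ∈ RZ n ((p:ℤ)^e) := by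
  set g' : ℕ := (Finset.univ \ ({i, j} : Finset (Fin r))).gcd fun k => (n k).natAbs with hg'
  obtain ⟨mi, hmile, hmi⟩ := (Nat.dvd_prime_pow hp).mp
    (Nat.gcd_dvd_right (Nat.gcd g' (n i + 1).natAbs) (p^e))
  obtain ⟨mj, hmjle, hmj⟩ := (Nat.dvd_prime_pow hp).mp
    (Nat.gcd_dvd_right (Nat.gcd g' (n j + 1).natAbs) (p^e))
  rcases le_total mi mj with hle | hle
  · refine pair_core n hp hij hpi hk ?_ yi yj hN
    rw [← hg', hmi, hmj]
    exact pow_dvd_pow p hle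
  · rw [add_comm]
    refine pair_core n hp hij.symm hpj (fun k hkj hki => hk k hki hkj) ?_ yj yi ?_
    · rw [Finset.pair_comm j i, ← hg', hmi, hmj]
      exact pow_dvd_pow p hle
    · rw [Npair'_comm]
      exact (dvd_sub_comm).mp hN

lemma local_odd (hsum : ∑ i, n i = -2) {p : ℕ} (hp : p.Prime) (hp2 : p ≠ 2) (e : ℕ)
    (y : Fin r → ℤ) (hy : ∀ i j, i ≠ j → (Npair' n i j : ℤ) ∣ y i - y j) :
    y ∈ RZ n ((p:ℤ)^e) := by
  set q : ℤ := (p:ℤ)^e with hq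
  have hpZ : Prime ((p:ℕ):ℤ) := Nat.prime_iff_prime_int.mp hp
  have hp2Z : ¬ (p:ℤ) ∣ 2 := by
    intro h
    have h' : p ∣ 2 := by exact_mod_cast h
    exact hp2 ((Nat.prime_dvd_prime_iff_eq hp Nat.prime_two).mp h')
  -- "good" coordinates can be filled arbitrarily
  have hGood : ∀ i : Fin r, (IsCoprime q (n i + 1) ∨
      ∃ j k : Fin r, j ≠ k ∧ j ≠ i ∧ k ≠ i ∧ ¬(p:ℤ) ∣ n j ∧ ¬(p:ℤ) ∣ n k) →
      ∀ c, EZ i c ∈ RZ n q := by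
    rintro i (h | ⟨j, k, hjk, hji, hki, hnj, hnk⟩) c
    · exact single_mem_RZ_of_coprime_a n q h c
    · refine single_mem_RZ_of_coprime n q (two_mem_Ival n q hji.symm hki.symm hjk) ?_ c
      have hnd : ¬ (p:ℤ) ∣ 2 * n j * n k := by
        intro h
        rcases hpZ.dvd_mul.mp h with h' | h'
        · rcases hpZ.dvd_mul.mp h' with h'' | h''
          · exact hp2Z h''
          · exact hnj h''
        · exact hnk h'
      exact (hpZ.coprime_iff_not_dvd.mpr hnd).pow_left
  by_cases hall : ∀ i : Fin r, IsCoprime q (n i + 1) ∨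
      ∃ j k : Fin r, j ≠ k ∧ j ≠ i ∧ k ≠ i ∧ ¬(p:ℤ) ∣ n j ∧ ¬(p:ℤ) ∣ n k
  · rw [show y = ∑ m, EZ m (y m) from (Finset.univ_sum_single y).symm]
    exact sum_mem fun m _ => hGood m (hall m) (y m)
  · push_neg at hall
    obtain ⟨i, hi1, hi2⟩ := hall
    have hpai : (p:ℤ) ∣ n i + 1 := by
      by_contra h
      exact hi1 ((hpZ.coprime_iff_not_dvd.mpr h).pow_left)
    have hpni : ¬ (p:ℤ) ∣ n i := by
      intro h
      exact hpZ.not_unit (isUnit_of_dvd_one (by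
        have := dvd_sub hpai h
        simpa using this))
    -- find the unique j with p ∤ n j
    have hex : ∃ j : Fin r, j ≠ i ∧ ¬ (p:ℤ) ∣ n j := by
      by_contra h
      push_neg at h
      have hdvd : (p:ℤ) ∣ (n i + 1) + ∑ k ∈ Finset.univ.erase i, n k :=
        dvd_add hpai (Finset.dvd_sum fun k hk => h k (Finset.ne_of_mem_erase hk))
      have hsum' : (n i + 1) + ∑ k ∈ Finset.univ.erase i, n k = -1 := by
        have h2 := Finset.add_sum_erase Finset.univ n (Finset.mem_univ i)
        rw [hsum] at h2
        linarith
      rw [hsum'] at hdvd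
      exact hpZ.not_unit (isUnit_of_dvd_one (by simpa using hdvd.neg_right))
    obtain ⟨j, hji, hpnj⟩ := hex
    have huniq : ∀ k, k ≠ i → k ≠ j → (p:ℤ) ∣ n k := by
      intro k hki hkj
      exact hi2 j k (fun h => hkj h.symm) hji hki hpnj
    -- p divides a j as well
    have hpaj : (p:ℤ) ∣ n j + 1 := by
      have hjmem : j ∈ Finset.univ.erase i := Finset.mem_erase.mpr ⟨hji, Finset.mem_univ j⟩
      have h2 := Finset.add_sum_erase (Finset.univ.erase i) n hjmem
      have h3 := Finset.add_sum_erase Finset.univ n (Finset.mem_univ i)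
      rw [hsum] at h3
      -- (n i + 1) + (n j + 1) + rest = 0
      have hrest : (p:ℤ) ∣ ∑ k ∈ (Finset.univ.erase i).erase j, n k :=
        Finset.dvd_sum fun k hk => huniq k
          (Finset.ne_of_mem_erase (Finset.mem_of_mem_erase hk)) (Finset.ne_of_mem_erase hk)
      have heq : n j + 1 = -(n i + 1) - (∑ k ∈ (Finset.univ.erase i).erase j, n k) := by
        linarith
      rw [heq]
      exact dvd_sub (hpai.neg_right) hrest
    have hpnj' : ¬ (p:ℤ) ∣ n j := hpnj
    have hkcop : ∀ k, k ≠ i → k ≠ j → IsCoprime q (n k + 1) := by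
      intro k hki hkj
      have h : ¬ (p:ℤ) ∣ n k + 1 := by
        intro h
        exact hpZ.not_unit (isUnit_of_dvd_one (by
          have := dvd_sub h (huniq k hki hkj)
          simpa using this))
      exact (hpZ.coprime_iff_not_dvd.mpr h).pow_left
    -- decompose y
    have hjmem : j ∈ Finset.univ.erase i := Finset.mem_erase.mpr ⟨hji, Finset.mem_univ j⟩
    have hdec : y = (EZ i (y i) + EZ j (y j)) +
        ∑ m ∈ (Finset.univ.erase i).erase j, EZ m (y m) := by
      conv_lhs => rw [show y = ∑ m, EZ m (y m) from (Finset.univ_sum_single y).symm]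
      rw [← Finset.add_sum_erase _ _ (Finset.mem_univ i),
        ← Finset.add_sum_erase _ _ hjmem]
      ring
    rw [hdec]
    refine (RZ n q).add_mem (pair_mem n hp (fun h => hji h.symm) hpni hpnj' hkcop _ _
      (hy i j (fun h => hji h.symm))) ?_
    refine sum_mem fun m hm => ?_
    have hmi : m ≠ i := Finset.ne_of_mem_erase (Finset.mem_of_mem_erase hm)
    have hmj : m ≠ j := Finset.ne_of_mem_erase hm
    exact hGood m (Or.inl (hkcop m hmi hmj)) (y m)

end locallemma
section localtwo
variable {r : ℕ} (n : Fin r → ℤ)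

lemma odd_not_two_dvd {a : ℤ} (h : Odd a) : ¬ (2:ℤ) ∣ a := by
  obtain ⟨k, hk⟩ := h
  rintro ⟨t, ht⟩
  omega

lemma local_two (hodd : 3 ≤ (Finset.univ.filter fun i => Odd (n i)).card) (e : ℕ)
    (y : Fin r → ℤ)
    (hpar : (2:ℤ) ∣ ∑ i ∈ Finset.univ.filter (fun i => Odd (n i)), y i) :
    y ∈ RZ n ((2:ℤ)^e) := by
  classical
  rcases Nat.eq_zero_or_pos e with rfl | he
  · exact QZ_le_RZ n _ (fun m => by simp)
  set q : ℤ := (2:ℤ)^e with hq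
  have h2q : (2:ℤ) ∣ q := dvd_pow_self 2 he.ne'
  have hpZ : Prime (2:ℤ) := Int.prime_two
  set S : Finset (Fin r) := Finset.univ.filter (fun i => Odd (n i)) with hSdef
  have hSmem : ∀ i, i ∈ S ↔ Odd (n i) := fun i => by simp [hSdef]
  have hScop : ∀ i ∈ S, IsCoprime q (n i) := fun i hi =>
    (hpZ.coprime_iff_not_dvd.mpr (odd_not_two_dvd ((hSmem i).mp hi))).pow_left
  have hnScop : ∀ i, i ∉ S → IsCoprime q (n i + 1) := by
    intro i hi
    have heven : Even (n i) := Int.not_odd_iff_even.mp (fun h => hi ((hSmem i).mpr h))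
    refine (hpZ.coprime_iff_not_dvd.mpr ?_).pow_left
    obtain ⟨k, hk⟩ := heven
    rintro ⟨t, ht⟩
    omega
  have hSne : S.Nonempty := Finset.card_pos.mp (by omega)
  obtain ⟨i0, hi0⟩ := hSne
  have hcop0 : IsCoprime q (n i0) := hScop i0 hi0
  set c : Fin r → ℤ := fun i => Classical.choose (coprime_solve hcop0 (y i)) with hcdef
  have hc : ∀ i, q ∣ y i - n i0 * c i := fun i => Classical.choose_spec (coprime_solve hcop0 (y i))
  set z : Fin r → ℤ := ∑ i ∈ S.erase i0, c i • tauZ n i i0 with hzdef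
  have hzL : z ∈ LZ n :=
    sum_mem fun i hi => (LZ n).zsmul_mem (tauZ_mem_LZ n (Finset.ne_of_mem_erase hi)) _
  have hzapp : ∀ m, z m = ∑ i ∈ S.erase i0,
      c i * ((Pi.single i (n i0) : Fin r → ℤ) m + (Pi.single i0 (n i) : Fin r → ℤ) m) := by
    intro m
    rw [hzdef, Finset.sum_apply]
    exact Finset.sum_congr rfl fun i _ => by
      simp [tauZ, EZ, Pi.smul_apply, mul_add]
  have hz3 : z i0 = ∑ i ∈ S.erase i0, c i * n i := by
    rw [hzapp]
    refine Finset.sum_congr rfl fun i hi => ?_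
    have hii0 : i ≠ i0 := Finset.ne_of_mem_erase hi
    simp [Pi.single_apply, Ne.symm hii0]
  have hz2 : ∀ m ∈ S.erase i0, z m = c m * n i0 := by
    intro m hm
    have hmi0 : m ≠ i0 := Finset.ne_of_mem_erase hm
    rw [hzapp]
    rw [Finset.sum_eq_single m]
    · simp [Pi.single_apply, hmi0]
    · intro i hi him
      simp [Pi.single_apply, Ne.symm him, hmi0]
    · intro h
      exact absurd hm h
  have hz1 : ∀ m, m ∉ S → z m = 0 := by
    intro m hm
    have hmi0 : m ≠ i0 := fun h => hm (h ▸ hi0)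
    rw [hzapp]
    refine Finset.sum_eq_zero fun i hi => ?_
    have him : m ≠ i := fun h => hm (h ▸ Finset.mem_of_mem_erase hi)
    simp [Pi.single_apply, him, hmi0]
  -- main decomposition
  have hyw : y = (y - z) + z := by ring
  rw [hyw]
  refine (RZ n q).add_mem ?_ (LZ_le_RZ n q hzL)
  rw [show y - z = ∑ m, EZ m ((y - z) m) from (Finset.univ_sum_single (y - z)).symm]
  refine sum_mem fun m _ => ?_
  by_cases hm : m ∈ S
  · by_cases hmi0 : m = i0
    · subst hmi0
      have hwm : (y - z) m = y m - ∑ i ∈ S.erase m, c i * n i := by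
        rw [Pi.sub_apply, hz3]
      set ρ : ℤ := y m - ∑ i ∈ S.erase m, c i * n i with hρdef
      rw [hwm]
      -- 2 ∣ ρ
      have hterm : ∀ i ∈ S.erase m, (2:ℤ) ∣ y i + c i * n i := by
        intro i hi
        have h1 : (2:ℤ) ∣ y i - n m * c i := h2q.trans (hc i)
        have h2 : (2:ℤ) ∣ n i + n m := by
          obtain ⟨k, hk⟩ := ((hSmem i).mp (Finset.mem_of_mem_erase hi)).add_odd
            ((hSmem m).mp hm)
          exact ⟨k, by omega⟩
        have heq : y i + c i * n i = (y i - n m * c i) + c i * (n i + n m) := by ring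
        rw [heq]
        exact dvd_add h1 (h2.mul_left _)
      have hρ2 : (2:ℤ) ∣ ρ := by
        have hsum2 : (2:ℤ) ∣ ∑ i ∈ S.erase m, (y i + c i * n i) := Finset.dvd_sum hterm
        have hStot : ∑ i ∈ S, y i = y m + ∑ i ∈ S.erase m, y i :=
          (Finset.add_sum_erase S y hm).symm
        have heq : ρ = (∑ i ∈ S, y i) - ∑ i ∈ S.erase m, (y i + c i * n i) := by
          rw [hρdef, hStot, Finset.sum_add_distrib]
          ring
        rw [heq]
        exact dvd_sub hpar hsum2
      obtain ⟨ρ', hρ'⟩ := hρ2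
      -- two more odd indices
      have hcard : 1 < (S.erase m).card := by
        rw [Finset.card_erase_of_mem hm]
        omega
      obtain ⟨j, hj, k, hk, hjk⟩ := Finset.one_lt_card.mp hcard
      have hjm : j ≠ m := Finset.ne_of_mem_erase hj
      have hkm : k ≠ m := Finset.ne_of_mem_erase hk
      have hIval : 2 * n j * n k ∈ Ival n q m := two_mem_Ival n q hjm.symm hkm.symm hjk
      have hcopjk : IsCoprime q (n j * n k) := by
        refine (hpZ.coprime_iff_not_dvd.mpr ?_).pow_left
        intro h
        rcases hpZ.dvd_mul.mp h with h' | h'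
        · exact odd_not_two_dvd ((hSmem j).mp (Finset.mem_of_mem_erase hj)) h'
        · exact odd_not_two_dvd ((hSmem k).mp (Finset.mem_of_mem_erase hk)) h'
      obtain ⟨d, hd⟩ := coprime_solve hcopjk ρ'
      have hsplit : EZ (r := r) m ρ
          = EZ m (d * (2 * n j * n k)) + EZ m (ρ - d * (2 * n j * n k)) := by
        rw [EZ_add]
        exact congrArg (EZ m) (by ring)
      rw [hsplit]
      refine (RZ n q).add_mem ((mem_Ival_iff n).mp hIval d) (QZ_le_RZ n q (EZ_mem_QZ q m ?_))
      have heq2 : ρ - d * (2 * n j * n k) = 2 * (ρ' - n j * n k * d) := by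
        rw [hρ']; ring
      rw [heq2]
      exact (hd.mul_left 2)
    · have hm' : m ∈ S.erase i0 := Finset.mem_erase.mpr ⟨hmi0, hm⟩
      have hwm : (y - z) m = y m - c m * n i0 := by rw [Pi.sub_apply, hz2 m hm']
      rw [hwm]
      refine QZ_le_RZ n q (EZ_mem_QZ q m ?_)
      have heq : y m - c m * n i0 = y m - n i0 * c m := by ring
      rw [heq]
      exact hc m
  · have hwm : (y - z) m = y m := by rw [Pi.sub_apply, hz1 m hm, sub_zero]
    rw [hwm]
    exact single_mem_RZ_of_coprime_a n q (hnScop m hm) (y m)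

end localtwo
section glue
variable {r : ℕ} (n : Fin r → ℤ)

lemma glue (y : Fin r → ℤ) (h : ∀ p e : ℕ, p.Prime → y ∈ RZ n ((p:ℤ)^e)) :
    ∀ A : ℕ, A ≠ 0 → y ∈ RZ n (A : ℤ) := by
  intro A
  induction A using Nat.strong_induction_on with
  | _ A ih =>
    intro hA
    rcases eq_or_ne A 1 with rfl | hA1
    · exact QZ_le_RZ n 1 (fun m => by simp)
    have hp : A.minFac.Prime := Nat.minFac_prime hA1
    set p := A.minFac with hpdef
    set k := A.factorization p with hkdef
    set B := A / p^k with hBdef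
    have hpk : p^k ∣ A := Nat.ordProj_dvd A p
    have hAeq : p^k * B = A := Nat.mul_div_cancel' hpk
    have hk0 : k ≠ 0 := by
      have h1 : p ∣ A := Nat.minFac_dvd A
      have h2 := (Nat.Prime.factorization_pos_of_dvd hp hA h1)
      omega
    have hpB : ¬ p ∣ B := Nat.not_dvd_ordCompl hp hA
    have hB0 : B ≠ 0 := by
      intro h0
      rw [h0, Nat.mul_zero] at hAeq
      exact hA hAeq.symm
    have hBlt : B < A := by
      have h1 : 1 < p^k := Nat.one_lt_pow hk0 hp.one_lt
      exact Nat.div_lt_self (Nat.pos_of_ne_zero hA) h1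
    have h1 : y ∈ RZ n (((p^k : ℕ) : ℕ) : ℤ) := by
      have := h p k hp
      rwa [show (((p^k : ℕ) : ℕ) : ℤ) = (p:ℤ)^k by push_cast; ring]
    have h2 : y ∈ RZ n ((B : ℕ) : ℤ) := ih B hBlt hB0
    have hcop : IsCoprime (((p^k : ℕ) : ℕ) : ℤ) ((B : ℕ) : ℤ) := by
      rw [Nat.isCoprime_iff_coprime]
      exact Nat.Coprime.pow_left _ ((Nat.Prime.coprime_iff_not_dvd hp).mpr hpB)
    obtain ⟨u, v, huv⟩ := hcop
    obtain ⟨z1, hz1, w1, hw1, hzw1⟩ := AddSubgroup.mem_sup.mp h1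
    obtain ⟨z2, hz2, w2, hw2, hzw2⟩ := AddSubgroup.mem_sup.mp h2
    have hyy : y = (u * ((p^k : ℕ) : ℤ)) • (z2 + w2) + (v * ((B:ℕ) : ℤ)) • (z1 + w1) := by
      rw [hzw1, hzw2, ← add_smul, huv, one_smul]
    have hcastA : ((A : ℕ) : ℤ) = ((p^k : ℕ) : ℤ) * ((B:ℕ) : ℤ) := by
      rw [← hAeq]; push_cast; ring
    rw [hyy, smul_add, smul_add]
    have hL1 : (u * ((p^k : ℕ) : ℤ)) • z2 ∈ LZ n := (LZ n).zsmul_mem hz2 _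
    have hL2 : (v * ((B:ℕ) : ℤ)) • z1 ∈ LZ n := (LZ n).zsmul_mem hz1 _
    have hQ1 : (u * ((p^k : ℕ) : ℤ)) • w2 ∈ QZ ((A:ℕ) : ℤ) := by
      intro m
      obtain ⟨t, ht⟩ := hw2 m
      refine ⟨u * t, ?_⟩
      have : ((u * ((p^k : ℕ) : ℤ)) • w2) m = u * ((p^k : ℕ) : ℤ) * w2 m := rfl
      rw [this, ht, hcastA]; ring
    have hQ2 : (v * ((B:ℕ) : ℤ)) • w1 ∈ QZ ((A:ℕ) : ℤ) := by
      intro m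
      obtain ⟨t, ht⟩ := hw1 m
      refine ⟨v * t, ?_⟩
      have : ((v * ((B:ℕ) : ℤ)) • w1) m = v * ((B:ℕ) : ℤ) * w1 m := rfl
      rw [this, ht, hcastA]; ring
    exact (RZ n _).add_mem
      ((RZ n _).add_mem (LZ_le_RZ n _ hL1) (QZ_le_RZ n _ hQ1))
      ((RZ n _).add_mem (LZ_le_RZ n _ hL2) (QZ_le_RZ n _ hQ2))

lemma final_lattice (hn : ∀ i, n i ≠ -1) (hsum : ∑ i, n i = -2)
    (hodd : 3 ≤ (Finset.univ.filter fun i => Odd (n i)).card)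
    (y : Fin r → ℤ)
    (hy : ∀ i j, i ≠ j → (Npair' n i j : ℤ) ∣ y i - y j)
    (hpar : (2:ℤ) ∣ ∑ i ∈ Finset.univ.filter (fun i => Odd (n i)), y i) :
    y ∈ LZ n := by
  have hall : ∀ p e : ℕ, p.Prime → y ∈ RZ n ((p:ℤ)^e) := by
    intro p e hp
    rcases eq_or_ne p 2 with rfl | hp2
    · have := local_two n hodd e y hpar
      rwa [show ((2:ℕ):ℤ) = (2:ℤ) by norm_num]
    · exact local_odd n hsum hp hp2 e y hy
  set A : ℕ := ∏ m, (n m + 1).natAbs with hAdef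
  have hA0 : A ≠ 0 := by
    rw [hAdef, Finset.prod_ne_zero_iff]
    intro m _
    rw [Int.natAbs_ne_zero]
    intro h
    exact hn m (by linarith)
  have hmem := glue n y hall A hA0
  obtain ⟨z, hz, w, hw, hzw⟩ := AddSubgroup.mem_sup.mp hmem
  rw [← hzw]
  refine (LZ n).add_mem hz ?_
  rw [show w = ∑ m, EZ m (w m) from (Finset.univ_sum_single w).symm]
  refine sum_mem fun m _ => ?_
  obtain ⟨t, ht⟩ := hw m
  have hdvd : (n m + 1) ∣ ((A:ℕ) : ℤ) := by
    rw [← Int.natAbs_dvd]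
    exact Int.natCast_dvd_natCast.mpr (Finset.dvd_prod_of_mem _ (Finset.mem_univ m))
  obtain ⟨s, hs⟩ := hdvd
  have heq : w m = (s * t) * (n m + 1) := by rw [ht, hs]; ring
  rw [heq, ← smul_EZ]
  exact (LZ n).zsmul_mem (aEZ_mem_LZ n m) _

end glue

section bridge
variable {r : ℕ} (n : Fin r → ℤ)

lemma Npair'_eq_Npair (i j : Fin r) : Npair' n i j = Npair n i j := rfl

lemma Npair'_dvd_other (i j k : Fin r) (hki : k ≠ i) (hkj : k ≠ j) :
    (Npair' n i j : ℤ) ∣ n k := by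
  have h1 : Npair' n i j ∣ (n k).natAbs := by
    refine (Nat.gcd_dvd_left _ _).trans (Finset.gcd_dvd ?_)
    simp [Finset.mem_sdiff, hki, hkj]
  exact Int.natCast_dvd_natCast.mpr h1 |>.trans (Int.natAbs_dvd.mpr dvd_rfl)

/-- the reduction homomorphism `ℤ^r → G` -/
def piHom : (Fin r → ℤ) →+ ((k : Fin r) → ZMod ((n k + 1).natAbs)) :=
  AddMonoidHom.mk' (fun y k => ((y k : ℤ) : ZMod ((n k + 1).natAbs)))
    (fun x y => by funext k; simp [Pi.add_apply])

lemma piHom_tauZ (i j : Fin r) : piHom n (tauZ n i j) = tau n i j := by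
  funext m
  show (((tauZ n i j) m : ℤ) : ZMod ((n m + 1).natAbs)) = _
  unfold tauZ EZ tau esingle
  rcases eq_or_ne m i with rfl | hmi
  · rcases eq_or_ne m j with rfl | hmj
    · simp
    · simp [Pi.single_apply, hmj, Pi.single_eq_same, Pi.single_eq_of_ne hmj]
  · rcases eq_or_ne m j with rfl | hmj
    · simp [Pi.single_apply, hmi, Pi.single_eq_same, Pi.single_eq_of_ne hmi]
    · simp [Pi.single_apply, hmi, hmj, Pi.single_eq_of_ne hmi, Pi.single_eq_of_ne hmj]

lemma piHom_aEZ (i : Fin r) : piHom n (EZ i (n i + 1)) = 0 := by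
  funext m
  show (((EZ i (n i + 1)) m : ℤ) : ZMod ((n m + 1).natAbs)) = 0
  unfold EZ
  rcases eq_or_ne m i with rfl | hmi
  · simp only [Pi.single_eq_same]
    rw [ZMod.intCast_zmod_eq_zero_iff_dvd]
    exact Int.natAbs_dvd.mpr dvd_rfl
  · simp [Pi.single_apply, hmi]

lemma piHom_LZ_le_Hsub : ∀ w ∈ LZ n, piHom n w ∈ Hsub n := by
  have h : LZ n ≤ (Hsub n).comap (piHom n) := by
    rw [LZ]
    refine AddSubgroup.closure_le _ |>.mpr ?_
    rintro x (⟨i, j, hij, rfl⟩ | ⟨i, rfl⟩)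
    · show piHom n (tauZ n i j) ∈ Hsub n
      rw [piHom_tauZ]
      exact AddSubgroup.subset_closure ⟨i, j, hij, rfl⟩
    · show piHom n (EZ i (n i + 1)) ∈ Hsub n
      rw [piHom_aEZ]
      exact (Hsub n).zero_mem
  exact fun w hw => h hw

end bridge

section main
variable {r : ℕ} (n : Fin r → ℤ)

lemma tau_apply_int (i j m : Fin r) (hij : i ≠ j) :
    tau n i j m = (((if m = i then n j else 0) + (if m = j then n i else 0) : ℤ) :
      ZMod ((n m + 1).natAbs)) := by
  unfold tau esingle
  rcases eq_or_ne m i with rfl | hmi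
  · have hmj : m ≠ j := hij
    simp [Pi.single_eq_same, Pi.single_eq_of_ne hmj, hmj]
  · rcases eq_or_ne m j with rfl | hmj
    · simp [Pi.single_eq_same, Pi.single_eq_of_ne hmi, hmi]
    · simp [Pi.single_eq_of_ne hmi, Pi.single_eq_of_ne hmj, hmi, hmj]

lemma even_int_dvd {a : ℤ} (h : Even a) : (2:ℤ) ∣ a := by
  obtain ⟨k, hk⟩ := h; exact ⟨k, by omega⟩

lemma tau_mem_kers {i j : Fin r} (hij : i ≠ j) :
    tau n i j ∈ (Phibar n).ker ⊓ (sbar n).ker := by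
  rw [AddSubgroup.mem_inf]
  constructor
  · rw [AddMonoidHom.mem_ker]
    funext p
    obtain ⟨⟨a, b⟩, hab⟩ := p
    have hne : a ≠ b := ne_of_lt hab
    show ZMod.castHom (Npair_dvd_fst n a b) (ZMod (Npair n a b)) (tau n i j a)
        - ZMod.castHom (Npair_dvd_snd n a b) (ZMod (Npair n a b)) (tau n i j b) = 0
    rw [tau_apply_int n i j a hij, tau_apply_int n i j b hij, map_intCast, map_intCast,
      ← Int.cast_sub, ZMod.intCast_zmod_eq_zero_iff_dvd]
    rw [show Npair n a b = Npair' n a b from rfl]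
    have hfst := Npair'_dvd_fst n a b
    have hsnd := Npair'_dvd_snd n a b
    rcases eq_or_ne a i with hai | hai
    · have haj : a ≠ j := by rw [hai]; exact hij
      rcases eq_or_ne b j with hbj | hbj
      · have hbi : b ≠ i := by rw [hbj]; exact hij.symm
        rw [if_pos hai, if_neg haj, if_neg hbi, if_pos hbj]
        have h : (n j + 0) - ((0:ℤ) + n i) = (n b + 1) - (n a + 1) := by
          rw [← hbj, ← hai]; ring
        rw [h]; exact dvd_sub hsnd hfst
      · have hbi : b ≠ i := by rw [← hai]; exact hne.symm
        rw [if_pos hai, if_neg haj, if_neg hbi, if_neg hbj]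
        have h : (n j + 0) - ((0:ℤ) + 0) = n j := by ring
        rw [h]; exact Npair'_dvd_other n a b j (Ne.symm haj) (Ne.symm hbj)
    · rcases eq_or_ne a j with haj | haj
      · rcases eq_or_ne b i with hbi | hbi
        · have hbj : b ≠ j := by rw [hbi]; exact hij
          rw [if_neg hai, if_pos haj, if_pos hbi, if_neg hbj]
          have h : ((0:ℤ) + n i) - (n j + 0) = (n b + 1) - (n a + 1) := by
            rw [← hbi, ← haj]; ring
          rw [h]; exact dvd_sub hsnd hfst
        · have hbj : b ≠ j := by rw [← haj]; exact hne.symm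
          rw [if_neg hai, if_pos haj, if_neg hbi, if_neg hbj]
          have h : ((0:ℤ) + n i) - (0 + 0) = n i := by ring
          rw [h]; exact Npair'_dvd_other n a b i (Ne.symm hai) (Ne.symm hbi)
      · rcases eq_or_ne b i with hbi | hbi
        · have hbj : b ≠ j := by rw [hbi]; exact hij
          rw [if_neg hai, if_neg haj, if_pos hbi, if_neg hbj]
          have h : ((0:ℤ) + 0) - (n j + 0) = -(n j) := by ring
          rw [h]
          exact (Npair'_dvd_other n a b j (Ne.symm haj) (Ne.symm hbj)).neg_right
        · rcases eq_or_ne b j with hbj | hbj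
          · rw [if_neg hai, if_neg haj, if_neg hbi, if_pos hbj]
            have h : ((0:ℤ) + 0) - (0 + n i) = -(n i) := by ring
            rw [h]
            exact (Npair'_dvd_other n a b i (Ne.symm hai) (Ne.symm hbi)).neg_right
          · rw [if_neg hai, if_neg haj, if_neg hbi, if_neg hbj]
            simp
  · rw [AddMonoidHom.mem_ker]
    show (∑ m, if h : Odd (n m) then
      ZMod.castHom (two_dvd_natAbs_add_one h) (ZMod 2) (tau n i j m) else 0) = 0
    have hterm : ∀ m : Fin r, (if h : Odd (n m) then
        ZMod.castHom (two_dvd_natAbs_add_one h) (ZMod 2) (tau n i j m) else 0)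
        = if Odd (n m) then
            (((if m = i then n j else 0) + (if m = j then n i else 0) : ℤ) : ZMod 2) else 0 := by
      intro m
      by_cases h : Odd (n m)
      · simp only [dif_pos h, if_pos h, tau_apply_int n i j m hij, map_intCast]
      · simp only [dif_neg h, if_neg h]
    rw [Finset.sum_congr rfl (fun m _ => hterm m), ← Finset.sum_filter, ← Int.cast_sum,
      ZMod.intCast_zmod_eq_zero_iff_dvd]
    rw [Finset.sum_add_distrib, Finset.sum_ite_eq' _ i (fun _ => n j),
      Finset.sum_ite_eq' _ j (fun _ => n i)]
    have hmemS : ∀ m : Fin r, m ∈ Finset.univ.filter (fun i => Odd (n i)) ↔ Odd (n m) := by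
      intro m; simp
    by_cases hoi : Odd (n i) <;> by_cases hoj : Odd (n j)
    · rw [if_pos ((hmemS i).mpr hoi), if_pos ((hmemS j).mpr hoj)]
      exact_mod_cast even_int_dvd (hoj.add_odd hoi)
    · rw [if_pos ((hmemS i).mpr hoi), if_neg (fun h => hoj ((hmemS j).mp h))]
      have h2 : Even (n j + 0) := by
        rw [add_zero]; exact Int.not_odd_iff_even.mp hoj
      exact_mod_cast even_int_dvd h2
    · rw [if_neg (fun h => hoi ((hmemS i).mp h)), if_pos ((hmemS j).mpr hoj)]
      have h2 : Even ((0:ℤ) + n i) := by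
        rw [zero_add]; exact Int.not_odd_iff_even.mp hoi
      exact_mod_cast even_int_dvd h2
    · rw [if_neg (fun h => hoi ((hmemS i).mp h)), if_neg (fun h => hoj ((hmemS j).mp h))]
      norm_num

end main

/-- If no `n i` equals `-1`, `∑ n i = -2` and at least three indices `i` have `n i` odd,
then `H` is the intersection of the kernels of `Φ̄` and `s̄`. -/
theorem Hsub_eq_ker_inf_ker {r : ℕ} (n : Fin r → ℤ)
    (hn : ∀ i, n i ≠ -1) (hsum : ∑ i, n i = -2)
    (hodd : 3 ≤ (Finset.univ.filter fun i => Odd (n i)).card) :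
    Hsub n = (Phibar n).ker ⊓ (sbar n).ker := by
  classical
  apply le_antisymm
  · rw [Hsub]
    refine (AddSubgroup.closure_le _).mpr ?_
    rintro x ⟨i, j, hij, rfl⟩
    exact tau_mem_kers n hij
  · intro x hx
    rw [AddSubgroup.mem_inf] at hx
    obtain ⟨hk1, hk2⟩ := hx
    rw [AddMonoidHom.mem_ker] at hk1 hk2
    have hins : ∀ m : Fin r, NeZero ((n m + 1).natAbs) := fun m =>
      ⟨by rw [Int.natAbs_ne_zero]; intro h; exact hn m (by linarith)⟩
    set y : Fin r → ℤ := fun m => ((x m).val : ℤ) with hydef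
    have hxy : ∀ m, ((y m : ℤ) : ZMod ((n m + 1).natAbs)) = x m := by
      intro m
      haveI := hins m
      show ((((x m).val : ℕ) : ℤ) : ZMod ((n m + 1).natAbs)) = x m
      push_cast
      rw [ZMod.natCast_val, ZMod.cast_id]
    have hy' : ∀ i j : Fin r, i < j → (Npair' n i j : ℤ) ∣ y i - y j := by
      intro i j hlt
      have hc : ZMod.castHom (Npair_dvd_fst n i j) (ZMod (Npair n i j)) (x i)
          - ZMod.castHom (Npair_dvd_snd n i j) (ZMod (Npair n i j)) (x j) = 0 :=
        congrFun hk1 ⟨(i, j), hlt⟩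
      rw [← hxy i, ← hxy j, map_intCast, map_intCast, ← Int.cast_sub] at hc
      rw [show Npair' n i j = Npair n i j from rfl]
      exact (ZMod.intCast_zmod_eq_zero_iff_dvd _ _).mp hc
    have hy : ∀ i j : Fin r, i ≠ j → (Npair' n i j : ℤ) ∣ y i - y j := by
      intro i j hij
      rcases lt_trichotomy i j with h | h | h
      · exact hy' i j h
      · exact absurd h hij
      · rw [Npair'_comm]
        exact dvd_sub_comm.mp (hy' j i h)
    have hpar : (2:ℤ) ∣ ∑ i ∈ Finset.univ.filter (fun i => Odd (n i)), y i := by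
      have hc : (∑ m, if h : Odd (n m) then
          ZMod.castHom (two_dvd_natAbs_add_one h) (ZMod 2) (x m) else 0) = 0 := hk2
      have hterm : ∀ m : Fin r, (if h : Odd (n m) then
          ZMod.castHom (two_dvd_natAbs_add_one h) (ZMod 2) (x m) else 0)
          = if Odd (n m) then ((y m : ℤ) : ZMod 2) else 0 := by
        intro m
        by_cases h : Odd (n m)
        · simp only [dif_pos h, if_pos h, ← hxy m, map_intCast]
        · simp only [dif_neg h, if_neg h]
      rw [Finset.sum_congr rfl (fun m _ => hterm m), ← Finset.sum_filter, ← Int.cast_sum] at hc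
      have h2 := (ZMod.intCast_zmod_eq_zero_iff_dvd _ 2).mp hc
      exact_mod_cast h2
    have hyL : y ∈ LZ n := final_lattice n hn hsum hodd y hy hpar
    have hxeq : x = piHom n y := by
      funext m
      exact (hxy m).symm
    rw [hxeq]
    exact piHom_LZ_le_Hsub n y hyL
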